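/- In a perfect REL-algebra, let a, b, c be atoms with a ≤ b;c, a⌣ ≠ 0, and b⌣ ≠ 0. Then b⌣ ≤ c;(a⌣). -/
import Mathlib


class PerfectREL (α : Type*) [CompleteBooleanAlgebra α] [IsAtomic α] where
  comp : α → α → α
  conv : α → α
  id' : α
  ax2 : ∀ x y : α, conv (x ⊓ conv y) = conv x ⊓ y
  ax3l : ∀ x y z : α, comp (x ⊔ y) z = comp x z ⊔ comp y z
  ax3r : ∀ x y z : α, comp x (y ⊔ z) = comp x y ⊔ comp x z
  ax4l : comp (⊤ : α) ⊥ = ⊥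
  ax4r : comp (⊥ : α) ⊤ = ⊥
  ax5l : ∀ x y z : α, comp (conv x) y ⊓ z = comp (conv x) (y ⊓ comp (conv (conv x)) z) ⊓ z
  ax5r : ∀ x y z : α, comp x (conv y) ⊓ z = comp (x ⊓ comp z (conv (conv y))) (conv y) ⊓ z
  ax6l : ∀ x : α, comp id' x ≤ x
  ax6r : ∀ x : α, comp x id' ≤ x
  ax7 : comp (id' : α) id' = id'
  ax8 : comp ((conv (⊤ : α))ᶜ) ((conv (⊤ : α))ᶜ) ⊓ id' = ⊥
  ax9a : ∀ x y z : α, comp (comp (x ⊓ id') y) z = comp (x ⊓ id') (comp y z)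
  ax9b : ∀ x y z : α, comp (comp x (y ⊓ id')) z = comp x (comp (y ⊓ id') z)
  ax9c : ∀ x y z : α, comp (comp x y) (z ⊓ id') = comp x (comp y (z ⊓ id'))
  conv_sSup : ∀ S : Set α, conv (sSup S) = ⨆ x ∈ S, conv x
  comp_sSup_left : ∀ (S : Set α) (y : α), comp (sSup S) y = ⨆ x ∈ S, comp x y
  comp_sSup_right : ∀ (x : α) (S : Set α), comp x (sSup S) = ⨆ y ∈ S, comp x y

open PerfectREL

variable {α : Type*} [CompleteBooleanAlgebra α] [IsAtomic α] [PerfectREL α]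


lemma pconv_bot : conv (⊥ : α) = ⊥ := by
  have := conv_sSup (∅ : Set α); simpa using this

lemma pcomp_bot_right (x : α) : comp x (⊥ : α) = ⊥ := by
  have := comp_sSup_right x (∅ : Set α); simpa using this

lemma pcomp_bot_left (x : α) : comp (⊥ : α) x = ⊥ := by
  have := comp_sSup_left (∅ : Set α) x; simpa using this

lemma pconv_sup (x y : α) : conv (x ⊔ y) = conv x ⊔ conv y := by
  have h2 := conv_sSup ({x, y} : Set α)
  rw [sSup_pair] at h2
  simpa [iSup_or, iSup_sup_eq] using h2

lemma pconv_mono {x y : α} (h : x ≤ y) : conv x ≤ conv y := by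
  have h2 : conv (x ⊔ y) = conv x ⊔ conv y := pconv_sup x y
  rw [sup_eq_right.mpr h] at h2
  rw [h2]; exact le_sup_left

lemma pconv_conv (x : α) : conv (conv x) = conv (⊤ : α) ⊓ x := by
  have := ax2 (⊤ : α) x; simpa using this

lemma pconv_conv_conv (x : α) : conv (conv (conv x)) = conv x := by
  rw [pconv_conv]
  exact inf_eq_right.mpr (pconv_mono le_top)

lemma patom_le_of_inf_ne {a x : α} (ha : IsAtom a) (h : a ⊓ x ≠ ⊥) : a ≤ x := by
  rcases ha.le_iff.mp (inf_le_left : a ⊓ x ≤ a) with h' | h'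
  · exact absurd h' h
  · exact inf_eq_left.mp h'

lemma patom_conv_conv {a : α} (ha : IsAtom a) (h : conv a ≠ ⊥) : conv (conv a) = a := by
  have h3 : conv (conv (conv a)) = conv a := pconv_conv_conv a
  have hne : conv (conv a) ≠ ⊥ := by
    intro hb; rw [hb, pconv_bot] at h3; exact h h3.symm
  have hle : conv (conv a) ≤ a := by rw [pconv_conv]; exact inf_le_right
  rcases ha.le_iff.mp hle with h' | h'
  · exact absurd h' hne
  · exact h'

lemma pconv_isAtom {a : α} (ha : IsAtom a) (h : conv a ≠ ⊥) : IsAtom (conv a) := by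
  refine ⟨h, fun d hd => ?_⟩
  by_contra hdb
  have hdle : d ≤ conv a := le_of_lt hd
  have hdc : conv (conv d) = d := by
    rw [pconv_conv]
    exact inf_eq_right.mpr (hdle.trans (pconv_mono le_top))
  have hcdne : conv d ≠ ⊥ := by
    intro hb; rw [hb, pconv_bot] at hdc; exact hdb hdc.symm
  have hcd : conv d ≤ a := (pconv_mono hdle).trans_eq (patom_conv_conv ha h)
  have : conv d = a := by
    rcases ha.le_iff.mp hcd with h' | h'
    · exact absurd h' hcdne
    · exact h'
  have : d = conv a := by rw [← hdc, this]
  exact absurd this (ne_of_lt hd)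

lemma prot1 {a b c : α} (hb : IsAtom b) (hc : IsAtom c) (ha0 : a ≠ ⊥)
    (hbc : conv b ≠ ⊥) (h : a ≤ comp b c) : c ≤ comp (conv b) a := by
  have hbb : conv (conv b) = b := patom_conv_conv hb hbc
  have h5 := ax5l (conv b) c a
  rw [pconv_conv_conv, hbb] at h5
  have hne : comp b (c ⊓ comp (conv b) a) ⊓ a ≠ ⊥ := by
    rw [← h5]
    intro hbot
    exact ha0 (le_bot_iff.mp (hbot ▸ le_inf h le_rfl))
  apply patom_le_of_inf_ne hc
  intro hbot
  rw [hbot, pcomp_bot_right, bot_inf_eq] at hne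
  exact hne rfl

lemma prot2 {a b c : α} (hb : IsAtom b) (hc : IsAtom c) (ha0 : a ≠ ⊥)
    (hcc : conv c ≠ ⊥) (h : a ≤ comp b c) : b ≤ comp a (conv c) := by
  have hcb : conv (conv c) = c := patom_conv_conv hc hcc
  have h5 := ax5r b (conv c) a
  rw [pconv_conv_conv, hcb] at h5
  have hne : comp (b ⊓ comp a (conv c)) c ⊓ a ≠ ⊥ := by
    rw [← h5]
    intro hbot
    exact ha0 (le_bot_iff.mp (hbot ▸ le_inf h le_rfl))
  apply patom_le_of_inf_ne hb
  intro hbot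
  rw [hbot, pcomp_bot_left, bot_inf_eq] at hne
  exact hne rfl

theorem cycle_conv_b (a b c : α) (ha : IsAtom a) (hb : IsAtom b) (hc : IsAtom c)
    (h : a ≤ comp b c) (hac : conv a ≠ (⊥ : α)) (hbc : conv b ≠ (⊥ : α)) :
    conv b ≤ comp c (conv a) := by
  have h1 : c ≤ comp (conv b) a := prot1 hb hc ha.1 hbc h
  exact prot2 (pconv_isAtom hb hbc) ha hc.1 hac h1
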